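/- arXiv:1708.01638 — 5 statements merged into one kernel-verified Lean document; each statement's English description precedes it below -/
import Mathlib

section
/- Let A be an N × N matrix polynomial and let a be a zero of det A of multiplicity p. Suppose dim {v ∈ ℂᴺ : v* A(a) = 0} = dim {v ∈ ℂᴺ : A(a) v = 0} = p. Then the j-th derivative of the adjugate matrix polynomial Adj(A(x)) vanishes at a for j = 0, …, p−2, the (p−1)-st derivative of Adj(A(x)) at a is nonzero, and moreover rank (Adj A)^{(p−1)}(a) = p. -/
open Polynomial Matrix Module

/-- Key divisibility lemma: `(X - a)^k ∣ det M` where `k` is at most the nullity of `M(a)`. -/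
theorem key_dvd (N : ℕ) (M : Matrix (Fin N) (Fin N) (Polynomial ℂ)) (a : ℂ) (k : ℕ)
    (hk : k ≤ Module.finrank ℂ
      (LinearMap.ker (Matrix.mulVecLin (M.map (Polynomial.eval a))) : Submodule ℂ (Fin N → ℂ))) :
    (X - C a) ^ k ∣ M.det := by
  set K := LinearMap.ker (Matrix.mulVecLin (M.map (Polynomial.eval a)))
  obtain ⟨K', hcompl⟩ := Submodule.exists_isCompl K
  have hkk' : finrank ℂ K + finrank ℂ K' = N := by
    rw [Submodule.finrank_add_eq_of_isCompl hcompl, finrank_pi]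
    simp
  set m := finrank ℂ K
  set m' := finrank ℂ K'
  let b : Basis (Fin m ⊕ Fin m') ℂ (Fin N → ℂ) :=
    ((Module.finBasis ℂ K).prod (Module.finBasis ℂ K')).map
      (Submodule.prodEquivOfIsCompl K K' hcompl)
  let e : Fin m ⊕ Fin m' ≃ Fin N := finSumFinEquiv.trans (finCongr hkk')
  let b' : Basis (Fin N) ℂ (Fin N → ℂ) := b.reindex e
  have hb' : ∀ i : Fin m, b' (e (Sum.inl i)) ∈ K := by
    intro i
    have : b' (e (Sum.inl i)) = b (Sum.inl i) := by
      simp [b', Module.Basis.reindex_apply]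
    rw [this]
    have : b (Sum.inl i) = ((Module.finBasis ℂ K) i : Fin N → ℂ) := by
      simp [b, Submodule.coe_prodEquivOfIsCompl']
    rw [this]
    exact ((Module.finBasis ℂ K) i).2
  set S : Finset (Fin N) := Finset.univ.image (fun i : Fin m => e (Sum.inl i)) with hS
  have hScard : S.card = m := by
    rw [hS, Finset.card_image_of_injective _ (fun x y hxy => Sum.inl_injective (e.injective hxy))]
    simp
  set Cm : Matrix (Fin N) (Fin N) ℂ := (Pi.basisFun ℂ (Fin N)).toMatrix b' with hCm
  have hCunit : IsUnit Cm.det := by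
    apply Matrix.isUnit_det_of_left_inverse (B := b'.toMatrix (Pi.basisFun ℂ (Fin N)))
    exact Basis.toMatrix_mul_toMatrix_flip _ _
  have hcol : ∀ j ∈ S, (M.map (eval a)).mulVec (fun i => Cm i j) = 0 := by
    intro j hj
    obtain ⟨i, _, rfl⟩ := Finset.mem_image.mp hj
    have : (fun l => Cm l (e (Sum.inl i))) = b' (e (Sum.inl i)) := by
      funext l
      simp [hCm, Basis.toMatrix_apply, Pi.basisFun_repr]
    rw [this]
    exact hb' i
  set P : Matrix (Fin N) (Fin N) (Polynomial ℂ) := M * Cm.map (Polynomial.C : ℂ →+* Polynomial ℂ)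
    with hP
  have hPa : P.map (eval a) = M.map (eval a) * Cm := by
    have : P.map (eval a) = P.map (evalRingHom a) := rfl
    rw [this, hP, Matrix.map_mul]
    congr 1 <;> ext i j <;> simp
  have hdvdcol : ∀ j ∈ S, ∀ i, (X - C a) ∣ P i j := by
    intro j hj i
    rw [dvd_iff_isRoot]
    have : eval a (P i j) = (P.map (eval a)) i j := rfl
    rw [IsRoot, this, hPa]
    have := congrFun (hcol j hj) i
    rw [Matrix.mulVec] at this
    rw [Matrix.mul_apply]
    simpa [dotProduct] using this
  set Q : Matrix (Fin N) (Fin N) (Polynomial ℂ) :=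
    Matrix.of fun i j => if j ∈ S then P i j /ₘ (X - C a) else P i j with hQ
  have hfac : P = Q * Matrix.diagonal (fun j => if j ∈ S then X - C a else 1) := by
    ext i j
    rw [Matrix.mul_diagonal, hQ]
    by_cases hj : j ∈ S
    · simp only [Matrix.of_apply, hj, if_true]
      obtain ⟨c, hc⟩ := hdvdcol j hj i
      rw [hc, mul_divByMonic_cancel_left _ (monic_X_sub_C a), mul_comm]
    · simp [hj]
  have hdet : P.det = Q.det * (X - C a) ^ m := by
    rw [hfac, Matrix.det_mul, Matrix.det_diagonal]
    congr 1
    rw [Finset.prod_ite_mem, Finset.univ_inter, Finset.prod_const, hScard]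
  have hdvd : (X - C a) ^ m ∣ M.det * Polynomial.C Cm.det := by
    have hmapdet : (Cm.map (Polynomial.C : ℂ →+* Polynomial ℂ)).det = Polynomial.C Cm.det :=
      ((Polynomial.C : ℂ →+* Polynomial ℂ).map_det Cm).symm
    rw [← hmapdet, ← Matrix.det_mul, ← hP, hdet]
    exact Dvd.intro_left _ rfl
  have : (X - C a) ^ m ∣ M.det :=
    (IsUnit.dvd_mul_right (Polynomial.isUnit_C.mpr hCunit)).mp hdvd
  exact dvd_trans (pow_dvd_pow _ hk) this

/-- Evaluation of iterated derivatives of `(X - a)^m * r` at `a`. -/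
theorem deriv_eval_eq (a : ℂ) (m : ℕ) (q r : Polynomial ℂ)
    (h : q = (X - C a) ^ m * r) :
    (∀ j < m, eval a (Polynomial.derivative^[j] q) = 0) ∧
      eval a (Polynomial.derivative^[m] q) = (Nat.factorial m : ℂ) * eval a r := by
  have key : ∀ j, eval a (Polynomial.derivative^[j] q)
      = (Nat.factorial j : ℂ) * (Polynomial.taylor a q).coeff j := by
    intro j
    have h1 : Polynomial.derivative^[j] q = (Nat.factorial j : ℕ) • Polynomial.hasseDeriv j q := by
      rw [← Polynomial.factorial_smul_hasseDeriv]; rfl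
    rw [h1, Polynomial.taylor_coeff]
    rw [nsmul_eq_mul]
    simp
  have htay : Polynomial.taylor a q = X ^ m * Polynomial.taylor a r := by
    rw [h, Polynomial.taylor_mul]
    congr 1
    have h1 : Polynomial.taylor a (X - C a) = X := by
      simp [Polynomial.taylor_apply]
    calc Polynomial.taylor a ((X - C a) ^ m) = (Polynomial.taylorAlgHom a) ((X - C a) ^ m) := rfl
      _ = ((Polynomial.taylorAlgHom a) (X - C a)) ^ m := map_pow _ _ _
      _ = X ^ m := by
          rw [show ((Polynomial.taylorAlgHom a) (X - C a) : Polynomial ℂ)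
            = Polynomial.taylor a (X - C a) from rfl, h1]
  constructor
  · intro j hj
    rw [key, htay, Polynomial.coeff_X_pow_mul']
    simp [Nat.not_le.mpr hj]
  · rw [key, htay]
    have h2 : (X ^ m * Polynomial.taylor a r).coeff m = (Polynomial.taylor a r).coeff 0 := by
      simpa using Polynomial.coeff_X_pow_mul (Polynomial.taylor a r) m 0
    rw [h2, Polynomial.taylor_coeff_zero]

/-- Rank of a sum of matrices is at most the sum of ranks. -/
theorem matrix_rank_add_le {N : ℕ} (X Y : Matrix (Fin N) (Fin N) ℂ) :
    (X + Y).rank ≤ X.rank + Y.rank := by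
  have hr : LinearMap.range (X + Y).mulVecLin
      ≤ LinearMap.range X.mulVecLin ⊔ LinearMap.range Y.mulVecLin := by
    rintro x ⟨y, rfl⟩
    have : (X + Y).mulVecLin y = X.mulVecLin y + Y.mulVecLin y := by
      simp [Matrix.mulVecLin_apply, Matrix.add_mulVec]
    rw [this]
    exact Submodule.add_mem_sup ⟨y, rfl⟩ ⟨y, rfl⟩
  calc (X + Y).rank ≤ finrank ℂ (LinearMap.range X.mulVecLin ⊔ LinearMap.range Y.mulVecLin : Submodule ℂ (Fin N → ℂ)) :=
        Submodule.finrank_mono hr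
    _ ≤ X.rank + Y.rank := Submodule.finrank_add_le_finrank_add_finrank _ _

theorem finrank_span_singleton_le_one {N : ℕ} (u : Fin N → ℂ) :
    finrank ℂ (Submodule.span ℂ ({u} : Set (Fin N → ℂ))) ≤ 1 := by
  rcases eq_or_ne u 0 with hu | hu
  · rw [hu, Submodule.span_zero_singleton]
    simp
  · rw [finrank_span_singleton hu]

/-- Rank of `vecMulVec` is at most one. -/
theorem matrix_rank_vecMulVec_le {N : ℕ} (u v : Fin N → ℂ) :
    (Matrix.vecMulVec u v).rank ≤ 1 := by
  have hr : LinearMap.range (Matrix.vecMulVec u v).mulVecLin ≤ Submodule.span ℂ {u} := by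
    rintro x ⟨y, rfl⟩
    have : (Matrix.vecMulVec u v).mulVecLin y = (v ⬝ᵥ y) • u := by
      funext r
      simp only [Matrix.mulVecLin_apply, Matrix.mulVec, Matrix.vecMulVec_apply,
        dotProduct, Pi.smul_apply, smul_eq_mul, Finset.sum_mul]
      exact Finset.sum_congr rfl fun x _ => by ring
    rw [this]
    exact Submodule.smul_mem _ _ (Submodule.mem_span_singleton_self u)
  calc (Matrix.vecMulVec u v).rank
      ≤ finrank ℂ (Submodule.span ℂ ({u} : Set (Fin N → ℂ))) := Submodule.finrank_mono hr
    _ ≤ 1 := finrank_span_singleton_le_one u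

/-- Degenerate zeros of a matrix polynomial: if `a` is a zero of `det A` of multiplicity
`p` and the left and right null spaces of `A(a)` both have dimension `p`, then the first
`p - 1` derivatives of the adjugate `Adj A` vanish at `a`, the `(p-1)`-st derivative of
`Adj A` at `a` is nonzero, and its rank equals `p`. -/
theorem stmt1 (N : ℕ) (A : Matrix (Fin N) (Fin N) (Polynomial ℂ)) (a : ℂ) (p : ℕ)
    (hp : 0 < p) (hdet : A.det ≠ 0) (hmult : A.det.rootMultiplicity a = p)
    (hleft : Module.finrank ℂ
      (LinearMap.ker (Matrix.mulVecLin (A.map (Polynomial.eval a)).conjTranspose)) = p)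
    (hright : Module.finrank ℂ
      (LinearMap.ker (Matrix.mulVecLin (A.map (Polynomial.eval a)))) = p) :
    (∀ j, j + 2 ≤ p →
      A.adjugate.map (fun q => Polynomial.eval a (Polynomial.derivative^[j] q)) = 0) ∧
    A.adjugate.map (fun q => Polynomial.eval a (Polynomial.derivative^[p - 1] q)) ≠ 0 ∧
    (A.adjugate.map (fun q => Polynomial.eval a (Polynomial.derivative^[p - 1] q))).rank
      = p := by
  clear hleft
  set d : Polynomial ℂ := X - C a with hd
  set A0 : Matrix (Fin N) (Fin N) ℂ := A.map (eval a) with hA0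
  have hdne : d ≠ 0 := X_sub_C_ne_zero a
  -- rank-nullity for A0
  have hranknull : A0.rank + p = N := by
    have h1 := LinearMap.finrank_range_add_finrank_ker A0.mulVecLin
    rw [hright] at h1
    have h2 : finrank ℂ (Fin N → ℂ) = N := by simp
    rw [h2] at h1
    exact h1
  -- every entry of the adjugate is divisible by d^(p-1)
  have hdvdadj : ∀ i j, d ^ (p - 1) ∣ A.adjugate i j := by
    intro i j
    rw [Matrix.adjugate_apply]
    apply key_dvd N _ a (p - 1)
    have hmap : (A.updateRow j (Pi.single i 1)).map (eval a)
        = A0.updateRow j (Pi.single i 1) := by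
      rw [hA0]
      ext r c
      by_cases hr : r = j
      · subst hr
        simp [Matrix.updateRow_apply, Pi.single_apply, apply_ite (eval a)]
      · simp [Matrix.updateRow_apply, hr]
    rw [hmap]
    set V : Matrix (Fin N) (Fin N) ℂ :=
      Matrix.vecMulVec (Pi.single j 1) (Pi.single i 1 - A0 j) with hV
    have hdecomp : A0.updateRow j (Pi.single i 1) = A0 + V := by
      ext r c
      by_cases hr : r = j
      · subst hr
        simp [hV, Matrix.updateRow_apply, Matrix.vecMulVec_apply, Pi.single_apply]
      · simp [hV, Matrix.updateRow_apply, hr, Matrix.vecMulVec_apply, Pi.single_apply]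
    have hranksum : (A0.updateRow j (Pi.single i 1)).rank ≤ A0.rank + 1 := by
      rw [hdecomp]
      calc (A0 + V).rank ≤ A0.rank + V.rank := matrix_rank_add_le _ _
        _ ≤ A0.rank + 1 := by
            have h4 := matrix_rank_vecMulVec_le (Pi.single j (1:ℂ)) (Pi.single i 1 - A0 j)
            rw [← hV] at h4
            omega
    have hrn2 := LinearMap.finrank_range_add_finrank_ker (A0.updateRow j (Pi.single i 1)).mulVecLin
    have h2 : finrank ℂ (Fin N → ℂ) = N := by simp
    rw [h2] at hrn2
    have : (A0.updateRow j (Pi.single i 1)).rank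
        = finrank ℂ (LinearMap.range (A0.updateRow j (Pi.single i 1)).mulVecLin) := rfl
    omega
  -- the quotient matrix Bp
  have hmon : (d ^ (p - 1)).Monic := (monic_X_sub_C a).pow _
  set Bp : Matrix (Fin N) (Fin N) (Polynomial ℂ) :=
    Matrix.of fun i j => A.adjugate i j /ₘ d ^ (p - 1) with hBpdef
  have hBp : ∀ i j, A.adjugate i j = d ^ (p - 1) * Bp i j := by
    intro i j
    obtain ⟨c, hc⟩ := hdvdadj i j
    rw [hBpdef]
    simp only [Matrix.of_apply]
    rw [hc, mul_divByMonic_cancel_left _ hmon]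
  -- det factorization
  set g : Polynomial ℂ := A.det /ₘ d ^ p with hg
  have hdetfac : A.det = d ^ p * g := by
    conv_lhs => rw [← pow_mul_divByMonic_rootMultiplicity_eq A.det a, hmult]
  have hga : eval a g ≠ 0 := by
    have := eval_divByMonic_pow_rootMultiplicity_ne_zero a hdet
    rw [hmult] at this
    exact this
  have hdp : d ^ p = d ^ (p - 1) * d := by
    rw [← pow_succ]
    congr 1
    omega
  have hdppne : d ^ (p - 1) ≠ 0 := pow_ne_zero _ hdne
  -- key polynomial identities
  have hABp : A * Bp = (d * g) • (1 : Matrix (Fin N) (Fin N) (Polynomial ℂ)) := by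
    have h1 : A * A.adjugate = A.det • (1 : Matrix (Fin N) (Fin N) (Polynomial ℂ)) :=
      Matrix.mul_adjugate A
    have hadj : A.adjugate = (d ^ (p - 1)) • Bp := by
      refine Matrix.ext fun i j => ?_
      simp only [Matrix.smul_apply, smul_eq_mul]
      exact hBp i j
    rw [hadj, Matrix.mul_smul, hdetfac] at h1
    refine Matrix.ext fun i j => ?_
    apply mul_left_cancel₀ hdppne
    have e1 := congrFun (congrFun h1 i) j
    simp only [Matrix.smul_apply, smul_eq_mul] at e1 ⊢
    rw [e1, hdp]
    ring
  have hBpA : Bp * A = (d * g) • (1 : Matrix (Fin N) (Fin N) (Polynomial ℂ)) := by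
    have h1 : A.adjugate * A = A.det • (1 : Matrix (Fin N) (Fin N) (Polynomial ℂ)) :=
      Matrix.adjugate_mul A
    have hadj : A.adjugate = (d ^ (p - 1)) • Bp := by
      refine Matrix.ext fun i j => ?_
      simp only [Matrix.smul_apply, smul_eq_mul]
      exact hBp i j
    rw [hadj, Matrix.smul_mul, hdetfac] at h1
    refine Matrix.ext fun i j => ?_
    apply mul_left_cancel₀ hdppne
    have e1 := congrFun (congrFun h1 i) j
    simp only [Matrix.smul_apply, smul_eq_mul] at e1 ⊢
    rw [e1, hdp]
    ring
  -- evaluated matrices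
  set B0 : Matrix (Fin N) (Fin N) ℂ := Bp.map (eval a) with hB0
  have hevalmul : ∀ (M1 M2 : Matrix (Fin N) (Fin N) (Polynomial ℂ)),
      (M1 * M2).map (eval a) = M1.map (eval a) * M2.map (eval a) := by
    intro M1 M2
    have : ∀ (M : Matrix (Fin N) (Fin N) (Polynomial ℂ)),
        M.map (eval a) = M.map (evalRingHom a) := fun _ => rfl
    rw [this, this, this, Matrix.map_mul]
  have hA0B0 : A0 * B0 = 0 := by
    have h5 := congrArg (fun M => M.map (eval a)) hABp
    rw [hevalmul] at h5
    rw [← hA0, ← hB0] at h5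
    rw [h5]
    refine Matrix.ext fun i j => ?_
    simp [Matrix.map_apply, Matrix.smul_apply, Matrix.one_apply, apply_ite (eval a), hd]
  -- derivative identity
  set Ad : Matrix (Fin N) (Fin N) ℂ :=
    A.map (fun q => eval a (Polynomial.derivative q)) with hAd
  set Bd : Matrix (Fin N) (Fin N) ℂ :=
    Bp.map (fun q => eval a (Polynomial.derivative q)) with hBd
  have hKey : Ad * B0 + A0 * Bd = (eval a g) • (1 : Matrix (Fin N) (Fin N) ℂ) := by
    ext i j
    have h2 : Polynomial.derivative ((A * Bp) i j)
        = Polynomial.derivative (((d * g) • (1 : Matrix (Fin N) (Fin N) (Polynomial ℂ))) i j) := by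
      rw [hABp]
    have hL : eval a (Polynomial.derivative ((A * Bp) i j)) = (Ad * B0 + A0 * Bd) i j := by
      rw [Matrix.add_apply, Matrix.mul_apply, Matrix.mul_apply, Matrix.mul_apply,
        Polynomial.derivative_sum]
      simp only [Polynomial.derivative_mul, eval_finset_sum, eval_add, eval_mul,
        hAd, hBd, hA0, hB0, Matrix.map_apply]
      rw [← Finset.sum_add_distrib]
    have hR : eval a (Polynomial.derivative
        (((d * g) • (1 : Matrix (Fin N) (Fin N) (Polynomial ℂ))) i j))
        = ((eval a g) • (1 : Matrix (Fin N) (Fin N) ℂ)) i j := by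
      by_cases hij : i = j
      · subst hij
        simp [Matrix.smul_apply, Matrix.one_apply, Polynomial.derivative_mul, hd]
      · simp [Matrix.smul_apply, Matrix.one_apply, hij]
    rw [← hL, h2, hR]
  -- rank bounds
  have hrankB0le : B0.rank ≤ p := by
    have hr : LinearMap.range B0.mulVecLin ≤ LinearMap.ker A0.mulVecLin := by
      rintro x ⟨y, rfl⟩
      rw [LinearMap.mem_ker]
      have : A0.mulVecLin (B0.mulVecLin y) = (A0 * B0).mulVecLin y := by
        rw [Matrix.mulVecLin_mul]; rfl
      rw [this, hA0B0]
      simp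
    calc B0.rank ≤ finrank ℂ (LinearMap.ker A0.mulVecLin) := Submodule.finrank_mono hr
      _ = p := hright
  have hrankB0ge : p ≤ B0.rank := by
    have hunit : ((eval a g) • (1 : Matrix (Fin N) (Fin N) ℂ)).rank = N := by
      rw [Matrix.rank_of_isUnit]
      · simp
      · rw [Matrix.isUnit_iff_isUnit_det, Matrix.smul_one_eq_diagonal, Matrix.det_diagonal]
        simp only [Finset.prod_const]
        exact (isUnit_iff_ne_zero.mpr hga).pow _
    have h1 : ((eval a g) • (1 : Matrix (Fin N) (Fin N) ℂ)).rank
        ≤ (Ad * B0).rank + (A0 * Bd).rank := by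
      rw [← hKey]
      exact matrix_rank_add_le _ _
    have h2 : (Ad * B0).rank ≤ B0.rank := Matrix.rank_mul_le_right _ _
    have h3 : (A0 * Bd).rank ≤ A0.rank := Matrix.rank_mul_le_left _ _
    omega
  have hrankB0 : B0.rank = p := le_antisymm hrankB0le hrankB0ge
  -- the derivative matrix is a nonzero multiple of B0
  have hDm : A.adjugate.map (fun q => Polynomial.eval a (Polynomial.derivative^[p - 1] q))
      = ((Nat.factorial (p - 1) : ℂ)) • B0 := by
    ext i j
    simp only [Matrix.map_apply, Matrix.smul_apply, smul_eq_mul, hB0]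
    exact (deriv_eval_eq a (p - 1) _ _ (hBp i j)).2
  have hfacne : (Nat.factorial (p - 1) : ℂ) ≠ 0 := Nat.cast_ne_zero.mpr (Nat.factorial_ne_zero _)
  have hrankDm : (A.adjugate.map
      (fun q => Polynomial.eval a (Polynomial.derivative^[p - 1] q))).rank = p := by
    rw [hDm]
    have : ((Nat.factorial (p - 1) : ℂ)) • B0 = ((Nat.factorial (p - 1) : ℂ) • (1 : Matrix (Fin N) (Fin N) ℂ)) * B0 := by
      rw [Matrix.smul_mul, one_mul]
    rw [this, Matrix.rank_mul_eq_right_of_isUnit_det, hrankB0]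
    rw [Matrix.smul_one_eq_diagonal, Matrix.det_diagonal]
    simp only [Finset.prod_const]
    exact (isUnit_iff_ne_zero.mpr hfacne).pow _
  refine ⟨?_, ?_, hrankDm⟩
  · intro j hj
    ext i j'
    simp only [Matrix.map_apply, Matrix.zero_apply]
    exact (deriv_eval_eq a (p - 1) _ _ (hBp i j')).1 j (by omega)
  · intro h0
    rw [h0, Matrix.rank_zero] at hrankDm
    omega
end

section
/- Let A(x) be an N × N matrix polynomial and a a zero of det A(x) of multiplicity p satisfying the rank conditions of the degenerate-zero lemma. Then A(a) · (Adj A)^{(p−1)}(a) = 0 and (Adj A)^{(p−1)}(a) · A(a) = 0. -/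
/-!
If `A(a)` has nullity `p`, every entry of `Adj A` is a minor whose value at `a` still has nullity
at least `p - 1`, and the determinant of a polynomial matrix whose value at `a` has nullity `k` is
divisible by `(X - a)^k`: a constant invertible column operation moves a kernel vector of `M(a)`
into one column, which then vanishes at `a` and yields a factor `X - a`. Now differentiate
`A · Adj A = det A · I` exactly `p - 1` times by Leibniz' rule and evaluate at `a`: every term
with a lower derivative of `Adj A` vanishes, and so does `(det A)^{(p-1)}(a)` because `a` is a
root of order `p`. What remains is `A(a) · Adj^{(p-1)}(a) = 0`; the other side is symmetric.
-/

open Polynomial Module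

theorem Submodule.finrank_le_finrank_inf_ker_add_one {K V : Type*} [Field K] [AddCommGroup V]
    [Module K V] [FiniteDimensional K V] (W : Submodule K V) (f : V →ₗ[K] K) :
    finrank K W ≤ finrank K ↥(W ⊓ LinearMap.ker f) + 1 := by
  have hsup := Submodule.finrank_sup_add_finrank_inf_eq W (LinearMap.ker f)
  have hsup_le := Submodule.finrank_le (W ⊔ LinearMap.ker f)
  have hrank := LinearMap.finrank_range_add_finrank_ker f
  have hrange_le : finrank K (LinearMap.range f) ≤ 1 := by
    simpa using Submodule.finrank_le (LinearMap.range f)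
  omega

theorem Polynomial.eval_iterate_derivative_mul_of_X_sub_C_pow_dvd {R : Type*} [CommRing R]
    {a : R} {k : ℕ} (f : R[X]) {q : R[X]} (hq : (X - C a) ^ k ∣ q) :
    eval a (derivative^[k] (f * q)) = eval a f * eval a (derivative^[k] q) := by
  rw [iterate_derivative_mul, eval_finsetSum,
    Finset.sum_eq_single_of_mem k (Finset.mem_range.mpr k.lt_succ_self)]
  · simp
  · intro m hm hmk
    have hlt : m < k := by grind
    have hroot : (derivative^[m] q).IsRoot a := dvd_iff_isRoot.mp <|
      (dvd_pow_self _ (Nat.sub_ne_zero_of_lt hlt)).trans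
        (pow_sub_dvd_iterate_derivative_of_pow_dvd m hq)
    simp [hroot.eq_zero]

namespace Matrix

theorem updateCol_mulVec_of_apply_eq_zero {l n R : Type*} [Fintype n] [DecidableEq n]
    [NonUnitalNonAssocSemiring R] (B : Matrix l n R) (j : n) (c : l → R) {v : n → R}
    (hv : v j = 0) : B.updateCol j c *ᵥ v = B *ᵥ v := by
  ext i
  refine Finset.sum_congr rfl fun j' _ => ?_
  obtain rfl | hj := eq_or_ne j' j
  · simp [hv]
  · simp [hj]

section Nullity

variable {K : Type*} [Field K]

theorem finrank_ker_mulVecLin_le_finrank_ker_updateCol_add_one {m n : Type*} [Fintype n]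
    [DecidableEq n] (B : Matrix m n K) (j : n) (c : m → K) :
    finrank K (LinearMap.ker B.mulVecLin) ≤
      finrank K (LinearMap.ker (B.updateCol j c).mulVecLin) + 1 := by
  have hle : LinearMap.ker B.mulVecLin ⊓ LinearMap.ker (LinearMap.proj j) ≤
      LinearMap.ker (B.updateCol j c).mulVecLin := fun v ⟨hv, hvj⟩ =>
    (updateCol_mulVec_of_apply_eq_zero B j c hvj).trans hv
  have := (LinearMap.ker B.mulVecLin).finrank_le_finrank_inf_ker_add_one (LinearMap.proj j)
  have := Submodule.finrank_mono hle
  omega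

theorem finrank_ker_mulVecLin_le_finrank_ker_updateRow_single_add_one {n : Type*} [Fintype n]
    [DecidableEq n] (B : Matrix n n K) (i j : n) :
    finrank K (LinearMap.ker B.mulVecLin) ≤
      finrank K (LinearMap.ker (B.updateRow j (Pi.single i 1)).mulVecLin) + 1 := by
  have hle : LinearMap.ker B.mulVecLin ⊓ LinearMap.ker (LinearMap.proj i) ≤
      LinearMap.ker (B.updateRow j (Pi.single i 1)).mulVecLin := by
    rintro v ⟨hv, hvi : v i = 0⟩
    change B *ᵥ v = 0 at hv
    change B.updateRow j (Pi.single i 1) *ᵥ v = 0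
    rw [updateRow_mulVec, hv, single_dotProduct, hvi, mul_zero, Function.update_eq_self_iff]
    rfl
  have := (LinearMap.ker B.mulVecLin).finrank_le_finrank_inf_ker_add_one (LinearMap.proj i)
  have := Submodule.finrank_mono hle
  omega

theorem finrank_ker_mulVecLin_mul_of_isUnit_det {m n : Type*} [Fintype n] [DecidableEq n]
    (B : Matrix m n K) {E : Matrix n n K} (hE : IsUnit E.det) :
    finrank K (LinearMap.ker (B * E).mulVecLin) = finrank K (LinearMap.ker B.mulVecLin) := by
  have hBE := LinearMap.finrank_range_add_finrank_ker (B * E).mulVecLin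
  have hB := LinearMap.finrank_range_add_finrank_ker B.mulVecLin
  have hrank : (B * E).rank = B.rank := rank_mul_eq_left_of_isUnit_det E B hE
  rw [rank, rank] at hrank
  omega

end Nullity

theorem det_eq_X_sub_C_mul_det_updateCol_divByMonic {n R : Type*} [Fintype n] [DecidableEq n]
    [CommRing R] (M : Matrix n n R[X]) (a : R) (j : n) (h : ∀ i, (M i j).IsRoot a) :
    M.det = (X - C a) * (M.updateCol j fun i => M i j /ₘ (X - C a)).det := by
  have hcol : ((X - C a) • fun i => M i j /ₘ (X - C a)) = fun i => M i j :=
    funext fun i => mul_divByMonic_eq_iff_isRoot.mpr (h i)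
  rw [← det_updateCol_smul, hcol, updateCol_eq_self]

theorem exists_det_mul_C_eq_X_sub_C_mul_det {n K : Type*} [Fintype n] [DecidableEq n] [Field K]
    (M : Matrix n n K[X]) (a : K) (h : LinearMap.ker (M.map (eval a)).mulVecLin ≠ ⊥) :
    ∃ (c : K) (M' : Matrix n n K[X]), c ≠ 0 ∧ M.det * C c = (X - C a) * M'.det ∧
      finrank K (LinearMap.ker (M.map (eval a)).mulVecLin) ≤
        finrank K (LinearMap.ker (M'.map (eval a)).mulVecLin) + 1 := by
  obtain ⟨v, hv, hv0⟩ := Submodule.exists_mem_ne_zero_of_ne_bot h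
  obtain ⟨j, hj⟩ := Function.ne_iff.mp hv0
  -- `M * E` has `M *ᵥ v` as its `j`-th column
  set E := (1 : Matrix n n K).updateCol j v
  have hdetE : E.det = v j := by rw [← cramer_apply, cramer_one]; rfl
  set M₁ := M * E.map C
  have hM₁ : M₁.map (eval a) = M.map (eval a) * E := by
    rw [← coe_evalRingHom, Matrix.map_mul, Matrix.map_map]
    congr 1
    ext
    simp
  have hcol : ∀ i, (M₁ i j).IsRoot a := fun i => by
    have := congrFun (congrFun hM₁ i) j
    rw [mul_updateCol, updateCol_self, show M.map (eval a) *ᵥ v = 0 from hv] at this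
    exact this
  refine ⟨v j, M₁.updateCol j fun i => M₁ i j /ₘ (X - C a), hj, ?_, ?_⟩
  · rw [← det_eq_X_sub_C_mul_det_updateCol_divByMonic M₁ a j hcol, det_mul, ← hdetE,
      RingHom.map_det]
    rfl
  · rw [map_updateCol, ← finrank_ker_mulVecLin_mul_of_isUnit_det (M.map (eval a))
      (hdetE ▸ hj.isUnit : IsUnit E.det), ← hM₁]
    exact finrank_ker_mulVecLin_le_finrank_ker_updateCol_add_one _ _ _

theorem X_sub_C_pow_dvd_det_of_le_finrank_ker {n K : Type*} [Fintype n] [DecidableEq n]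
    [Field K] (a : K) {k : ℕ} (M : Matrix n n K[X])
    (hk : k ≤ finrank K (LinearMap.ker (M.map (eval a)).mulVecLin)) : (X - C a) ^ k ∣ M.det := by
  induction k generalizing M with
  | zero => exact one_dvd _
  | succ k ih =>
    have hker : LinearMap.ker (M.map (eval a)).mulVecLin ≠ ⊥ := fun h => by
      rw [h, finrank_bot] at hk
      omega
    obtain ⟨c, M', hc, hdet, hM'⟩ := exists_det_mul_C_eq_X_sub_C_mul_det M a hker
    rw [← (isUnit_C.mpr hc.isUnit).dvd_mul_right, hdet, pow_succ']
    exact mul_dvd_mul_left _ (ih M' (by omega))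

theorem X_sub_C_pow_dvd_adjugate_apply {n K : Type*} [Fintype n] [DecidableEq n] [Field K]
    (a : K) {k : ℕ} (A : Matrix n n K[X])
    (hk : k + 1 ≤ finrank K (LinearMap.ker (A.map (eval a)).mulVecLin)) (i j : n) :
    (X - C a) ^ k ∣ A.adjugate i j := by
  rw [adjugate_apply]
  apply X_sub_C_pow_dvd_det_of_le_finrank_ker
  have hsingle : eval a ∘ Pi.single i (1 : K[X]) = Pi.single i 1 := by
    funext l
    simpa using Pi.apply_single (fun _ => eval a) (fun _ => eval_zero) i 1 l
  rw [map_updateRow, hsingle]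
  have := finrank_ker_mulVecLin_le_finrank_ker_updateRow_single_add_one (A.map (eval a)) i j
  omega

theorem map_eval_iterate_derivative_mul_of_X_sub_C_pow_dvd_right {l m n R : Type*} [Fintype m]
    [CommRing R] {a : R} {k : ℕ} (A : Matrix l m R[X]) (B : Matrix m n R[X])
    (hB : ∀ i j, (X - C a) ^ k ∣ B i j) :
    (A * B).map (fun q => eval a (derivative^[k] q)) =
      A.map (eval a) * B.map (fun q => eval a (derivative^[k] q)) := by
  ext i j
  simp only [map_apply, mul_apply, iterate_derivative_sum, eval_finsetSum,
    eval_iterate_derivative_mul_of_X_sub_C_pow_dvd _ (hB _ j)]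

theorem map_eval_iterate_derivative_mul_of_X_sub_C_pow_dvd_left {l m n R : Type*} [Fintype m]
    [CommRing R] {a : R} {k : ℕ} (A : Matrix l m R[X]) (B : Matrix m n R[X])
    (hA : ∀ i j, (X - C a) ^ k ∣ A i j) :
    (A * B).map (fun q => eval a (derivative^[k] q)) =
      A.map (fun q => eval a (derivative^[k] q)) * B.map (eval a) := by
  ext i j
  simp only [map_apply, mul_apply, iterate_derivative_sum, eval_finsetSum, mul_comm (A i _),
    eval_iterate_derivative_mul_of_X_sub_C_pow_dvd _ (hA i _), mul_comm (eval a (B _ j))]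

theorem map_eval_iterate_derivative_smul_one_of_lt_rootMultiplicity {n R : Type*}
    [DecidableEq n] [CommRing R] {a : R} {k : ℕ} {d : R[X]} (hk : k < d.rootMultiplicity a) :
    (d • (1 : Matrix n n R[X])).map (fun q => eval a (derivative^[k] q)) = 0 := by
  ext i j
  obtain rfl | hij := eq_or_ne i j
  · simpa using isRoot_iterate_derivative_of_lt_rootMultiplicity hk
  · simp [hij]

end Matrix

theorem stmt3_general (N : ℕ) (A : Matrix (Fin N) (Fin N) (Polynomial ℂ)) (a : ℂ) (p : ℕ)
    (hp : 0 < p) (hmult : A.det.rootMultiplicity a = p)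
    (hright : Module.finrank ℂ
      (LinearMap.ker (Matrix.mulVecLin (A.map (Polynomial.eval a)))) = p) :
    A.map (Polynomial.eval a) *
      A.adjugate.map (fun q => Polynomial.eval a (Polynomial.derivative^[p - 1] q)) = 0 ∧
    A.adjugate.map (fun q => Polynomial.eval a (Polynomial.derivative^[p - 1] q)) *
      A.map (Polynomial.eval a) = 0 := by
  have hadj : ∀ i j, (X - C a) ^ (p - 1) ∣ A.adjugate i j :=
    Matrix.X_sub_C_pow_dvd_adjugate_apply a A (by omega)
  have hdet := Matrix.map_eval_iterate_derivative_smul_one_of_lt_rootMultiplicity (n := Fin N)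
    (show p - 1 < A.det.rootMultiplicity a by omega)
  constructor
  · rw [← Matrix.map_eval_iterate_derivative_mul_of_X_sub_C_pow_dvd_right _ _ hadj,
      Matrix.mul_adjugate, hdet]
  · rw [← Matrix.map_eval_iterate_derivative_mul_of_X_sub_C_pow_dvd_left _ _ hadj,
      Matrix.adjugate_mul, hdet]

/-- Under the hypotheses of the degenerate-zero lemma, the evaluation `A(a)` annihilates
the `(p-1)`-st derivative of the adjugate of `A` at `a` on both sides. -/
theorem stmt3 (N : ℕ) (A : Matrix (Fin N) (Fin N) (Polynomial ℂ)) (a : ℂ) (p : ℕ)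
    (hp : 0 < p) (hdet : A.det ≠ 0) (hmult : A.det.rootMultiplicity a = p)
    (hleft : Module.finrank ℂ
      (LinearMap.ker (Matrix.mulVecLin (A.map (Polynomial.eval a)).conjTranspose)) = p)
    (hright : Module.finrank ℂ
      (LinearMap.ker (Matrix.mulVecLin (A.map (Polynomial.eval a)))) = p) :
    A.map (Polynomial.eval a) *
      A.adjugate.map (fun q => Polynomial.eval a (Polynomial.derivative^[p - 1] q)) = 0 ∧
    A.adjugate.map (fun q => Polynomial.eval a (Polynomial.derivative^[p - 1] q)) *
      A.map (Polynomial.eval a) = 0 :=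
  stmt3_general N A a p hp hmult hright
end

section
/- Let {V_n} and {G_n} be sequences of N × N matrix polynomials satisfying x V_n(x) = A_n V_{n+1}(x) + B_n V_n(x) + C_n V_{n−1}(x) and x G_n(x) = G_{n−1}(x) A_{n−1} + G_n(x) B_n + G_{n+1}(x) C_{n+1}, with V_{−1} = G_{−1} = 0, V_0 = G_0 = I_N, and let {V_n^{(1)}}, {G_n^{(1)}} satisfy the same recurrences with initial conditions V_{−1}^{(1)} = 0, V_0^{(1)} = A_0^{-1}, G_{−1}^{(1)} = 0, G_0^{(1)} = C_1^{-1}. Then for all n ≥ 0 and all x: V_n(x) G_{n−1}^{(1)}(x) − V_{n−1}^{(1)}(x) G_n(x) = 0. -/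
private lemma mcancel {N : ℕ} {A S C : Matrix (Fin N) (Fin N) ℂ}
    (hA : IsUnit A.det) (hC : IsUnit C.det) (h : A * S * C = 0) : S = 0 := by
  calc S = (A⁻¹ * A) * S * (C * C⁻¹) := by
        rw [Matrix.nonsing_inv_mul _ hA, Matrix.mul_nonsing_inv _ hC, one_mul, mul_one]
    _ = A⁻¹ * (A * S * C) * C⁻¹ := by simp only [mul_assoc]
    _ = 0 := by rw [h]; simp

private lemma mcancelL {N : ℕ} {A S T : Matrix (Fin N) (Fin N) ℂ}
    (hA : IsUnit A.det) (h : A * S = T) : S = A⁻¹ * T := by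
  rw [← h, ← mul_assoc, Matrix.nonsing_inv_mul _ hA, one_mul]

private lemma mcancelR {N : ℕ} {C S T : Matrix (Fin N) (Fin N) ℂ}
    (hC : IsUnit C.det) (h : S * C = T) : S = T * C⁻¹ := by
  rw [← h, mul_assoc, Matrix.mul_nonsing_inv _ hC, mul_one]

/-- For matrix biorthogonal polynomials and their first kind associated polynomials,
`Vₙ(x) G⁽¹⁾ₙ₋₁(x) - V⁽¹⁾ₙ₋₁(x) Gₙ(x) = 0` for all `n ≥ 0` (at `n = 0` the terms with
index `-1` vanish and the identity is trivial). -/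
theorem stmt4 (N : ℕ)
    (A B C : ℕ → Matrix (Fin N) (Fin N) ℂ)
    (hA : ∀ n, IsUnit (A n).det) (hC : ∀ n, IsUnit (C n).det)
    (V G V1 G1 : ℕ → ℂ → Matrix (Fin N) (Fin N) ℂ)
    (hV0 : ∀ x, V 0 x = 1) (hG0 : ∀ x, G 0 x = 1)
    (hV10 : ∀ x, V1 0 x = (A 0)⁻¹) (hG10 : ∀ x, G1 0 x = (C 1)⁻¹)
    (hVr0 : ∀ x : ℂ, x • V 0 x = A 0 * V 1 x + B 0 * V 0 x)
    (hVr : ∀ n, ∀ x : ℂ, x • V (n + 1) x =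
      A (n + 1) * V (n + 2) x + B (n + 1) * V (n + 1) x + C (n + 1) * V n x)
    (hGr0 : ∀ x : ℂ, x • G 0 x = G 0 x * B 0 + G 1 x * C 1)
    (hGr : ∀ n, ∀ x : ℂ, x • G (n + 1) x =
      G n x * A n + G (n + 1) x * B (n + 1) + G (n + 2) x * C (n + 2))
    (hV1r0 : ∀ x : ℂ, x • V1 0 x = A 1 * V1 1 x + B 1 * V1 0 x)
    (hV1r : ∀ n, ∀ x : ℂ, x • V1 (n + 1) x =
      A (n + 2) * V1 (n + 2) x + B (n + 2) * V1 (n + 1) x + C (n + 2) * V1 n x)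
    (hG1r0 : ∀ x : ℂ, x • G1 0 x = G1 0 x * B 1 + G1 1 x * C 2)
    (hG1r : ∀ n, ∀ x : ℂ, x • G1 (n + 1) x =
      G1 n x * A (n + 1) + G1 (n + 1) x * B (n + 2) + G1 (n + 2) x * C (n + 3)) :
    ∀ n, ∀ x : ℂ, V (n + 1) x * G1 n x - V1 n x * G (n + 1) x = 0 := by
  have hAi : ∀ n, A n * (A n)⁻¹ = 1 := fun n => Matrix.mul_nonsing_inv _ (hA n)
  have hAi' : ∀ n, (A n)⁻¹ * A n = 1 := fun n => Matrix.nonsing_inv_mul _ (hA n)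
  have hCi : ∀ n, C n * (C n)⁻¹ = 1 := fun n => Matrix.mul_nonsing_inv _ (hC n)
  have hCi' : ∀ n, (C n)⁻¹ * C n = 1 := fun n => Matrix.nonsing_inv_mul _ (hC n)
  suffices H : ∀ n,
      (∀ x : ℂ, V (n + 1) x * G1 n x - V1 n x * G (n + 1) x = 0) ∧
      (∀ x : ℂ, V (n + 2) x * G1 (n + 1) x - V1 (n + 1) x * G (n + 2) x = 0) ∧
      (∀ x : ℂ, V (n + 1) x * G1 (n + 1) x - V1 n x * G (n + 2) x = (C (n + 2))⁻¹) ∧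
      (∀ x : ℂ, V (n + 2) x * G1 n x - V1 (n + 1) x * G (n + 1) x = -(A (n + 1))⁻¹) by
    exact fun n x => (H n).1 x
  intro n
  induction n with
  | zero =>
    -- rearranged recurrences at the bottom
    have eV1 : ∀ x : ℂ, A 0 * V 1 x = x • (1 : Matrix (Fin N) (Fin N) ℂ) - B 0 := by
      intro x
      have h := hVr0 x
      rw [hV0, mul_one] at h
      rw [h]; abel
    have eG1 : ∀ x : ℂ, G 1 x * C 1 = x • (1 : Matrix (Fin N) (Fin N) ℂ) - B 0 := by
      intro x
      have h := hGr0 x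
      rw [hG0, one_mul] at h
      rw [h]; abel
    have eV11 : ∀ x : ℂ, A 1 * V1 1 x = x • (A 0)⁻¹ - B 1 * (A 0)⁻¹ := by
      intro x
      have h := hV1r0 x
      rw [hV10] at h
      rw [h]; abel
    have eG11 : ∀ x : ℂ, G1 1 x * C 2 = x • (C 1)⁻¹ - (C 1)⁻¹ * B 1 := by
      intro x
      have h := hG1r0 x
      rw [hG10] at h
      rw [h]; abel
    have eV2 : ∀ x : ℂ, A 1 * V 2 x = x • V 1 x - B 1 * V 1 x - C 1 := by
      intro x
      have h := hVr 0 x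
      rw [hV0, mul_one] at h
      rw [h]; abel
    have eG2 : ∀ x : ℂ, G 2 x * C 2 = x • G 1 x - A 0 - G 1 x * B 1 := by
      intro x
      have h := hGr 0 x
      rw [hG0, one_mul] at h
      rw [h]; abel
    -- S 0 = 0
    have hS0 : ∀ x : ℂ, V 1 x * G1 0 x - V1 0 x * G 1 x = 0 := by
      intro x
      refine mcancel (hA 0) (hC 1) ?_
      have key : (A 0 * V 1 x) * (G1 0 x * C 1) - (A 0 * V1 0 x) * (G 1 x * C 1) = 0 := by
        rw [hG10, hV10, hCi' 1, hAi 0, eV1, eG1]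
        simp
      calc A 0 * (V 1 x * G1 0 x - V1 0 x * G 1 x) * C 1
          = (A 0 * V 1 x) * (G1 0 x * C 1) - (A 0 * V1 0 x) * (G 1 x * C 1) := by
            simp only [mul_sub, sub_mul, mul_assoc]
        _ = 0 := key
    -- a convenient reformulation of S 0
    have hS0' : ∀ x : ℂ, V 1 x * (C 1)⁻¹ - (A 0)⁻¹ * G 1 x = 0 := by
      intro x
      have := hS0 x
      rwa [hG10, hV10] at this
    -- Q 0 = (C 2)⁻¹
    have hQ0 : ∀ x : ℂ, V 1 x * G1 1 x - V1 0 x * G 2 x = (C 2)⁻¹ := by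
      intro x
      have key : (V 1 x * G1 1 x - V1 0 x * G 2 x) * C 2 = 1 := by
        have : (V 1 x * G1 1 x - V1 0 x * G 2 x) * C 2
            = V 1 x * (G1 1 x * C 2) - V1 0 x * (G 2 x * C 2) := by
          simp only [sub_mul, mul_assoc]
        rw [this, eG11, eG2, hV10]
        have expand : V 1 x * (x • (C 1)⁻¹ - (C 1)⁻¹ * B 1)
            - (A 0)⁻¹ * (x • G 1 x - A 0 - G 1 x * B 1)
            = x • (V 1 x * (C 1)⁻¹ - (A 0)⁻¹ * G 1 x)
              - (V 1 x * (C 1)⁻¹ - (A 0)⁻¹ * G 1 x) * B 1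
              + (A 0)⁻¹ * A 0 := by
          simp only [mul_sub, sub_mul, smul_sub, smul_mul_assoc, mul_smul_comm,
            smul_smul, mul_assoc, one_mul, mul_one]
          abel
        rw [expand, hS0' x, hAi' 0]
        simp
      have := mcancelR (hC 2) key
      rwa [one_mul] at this
    -- R 0 = -(A 1)⁻¹
    have hR0 : ∀ x : ℂ, V 2 x * G1 0 x - V1 1 x * G 1 x = -(A 1)⁻¹ := by
      intro x
      have key : A 1 * (V 2 x * G1 0 x - V1 1 x * G 1 x) = -1 := by
        have : A 1 * (V 2 x * G1 0 x - V1 1 x * G 1 x)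
            = (A 1 * V 2 x) * G1 0 x - (A 1 * V1 1 x) * G 1 x := by
          simp only [mul_sub, mul_assoc]
        rw [this, eV2, eV11, hG10]
        have expand : (x • V 1 x - B 1 * V 1 x - C 1) * (C 1)⁻¹
            - (x • (A 0)⁻¹ - B 1 * (A 0)⁻¹) * G 1 x
            = x • (V 1 x * (C 1)⁻¹ - (A 0)⁻¹ * G 1 x)
              - B 1 * (V 1 x * (C 1)⁻¹ - (A 0)⁻¹ * G 1 x)
              - C 1 * (C 1)⁻¹ := by
          simp only [mul_sub, sub_mul, smul_sub, smul_mul_assoc, mul_smul_comm,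
            smul_smul, mul_assoc, one_mul, mul_one]
          abel
        rw [expand, hS0' x, hCi 1]
        simp
      have := mcancelL (hA 1) key
      rwa [mul_neg, mul_one] at this
    -- S 1 = 0
    have hS1 : ∀ x : ℂ, V 2 x * G1 1 x - V1 1 x * G 2 x = 0 := by
      intro x
      refine mcancel (hA 1) (hC 2) ?_
      have key : (A 1 * V 2 x) * (G1 1 x * C 2) - (A 1 * V1 1 x) * (G 2 x * C 2) = 0 := by
        rw [eV2, eV11, eG11, eG2]
        have expand : (x • V 1 x - B 1 * V 1 x - C 1) * (x • (C 1)⁻¹ - (C 1)⁻¹ * B 1)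
            - (x • (A 0)⁻¹ - B 1 * (A 0)⁻¹) * (x • G 1 x - A 0 - G 1 x * B 1)
            = (x * x) • (V 1 x * (C 1)⁻¹ - (A 0)⁻¹ * G 1 x)
              - x • ((V 1 x * (C 1)⁻¹ - (A 0)⁻¹ * G 1 x) * B 1)
              - x • (B 1 * (V 1 x * (C 1)⁻¹ - (A 0)⁻¹ * G 1 x))
              + B 1 * ((V 1 x * (C 1)⁻¹ - (A 0)⁻¹ * G 1 x) * B 1)
              - x • (C 1 * (C 1)⁻¹) + C 1 * ((C 1)⁻¹ * B 1)
              + x • ((A 0)⁻¹ * A 0) - B 1 * ((A 0)⁻¹ * A 0) := by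
          simp only [mul_sub, sub_mul, smul_sub, smul_mul_assoc, mul_smul_comm,
            smul_smul, mul_assoc, one_mul, mul_one]
          abel
        rw [expand, hS0' x, hCi 1, hAi' 0]
        have hc : C 1 * ((C 1)⁻¹ * B 1) = B 1 := by rw [← mul_assoc, hCi 1, one_mul]
        rw [hc]
        simp
      calc A 1 * (V 2 x * G1 1 x - V1 1 x * G 2 x) * C 2
          = (A 1 * V 2 x) * (G1 1 x * C 2) - (A 1 * V1 1 x) * (G 2 x * C 2) := by
            simp only [mul_sub, sub_mul, mul_assoc]
        _ = 0 := key
    exact ⟨hS0, hS1, hQ0, hR0⟩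
  | succ n ih =>
    obtain ⟨hS0, hS1, hQ, hR⟩ := ih
    -- rearranged recurrences
    have eV : ∀ x : ℂ, A (n + 2) * V (n + 3) x
        = x • V (n + 2) x - B (n + 2) * V (n + 2) x - C (n + 2) * V (n + 1) x := by
      intro x
      have h := hVr (n + 1) x
      rw [show n + 1 + 1 = n + 2 by omega, show n + 1 + 2 = n + 3 by omega] at h
      rw [h]; abel
    have eV1 : ∀ x : ℂ, A (n + 2) * V1 (n + 2) x
        = x • V1 (n + 1) x - B (n + 2) * V1 (n + 1) x - C (n + 2) * V1 n x := by
      intro x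
      have h := hV1r n x
      rw [h]; abel
    have eG1 : ∀ x : ℂ, G1 (n + 2) x * C (n + 3)
        = x • G1 (n + 1) x - G1 n x * A (n + 1) - G1 (n + 1) x * B (n + 2) := by
      intro x
      have h := hG1r n x
      rw [h]; abel
    have eG : ∀ x : ℂ, G (n + 3) x * C (n + 3)
        = x • G (n + 2) x - G (n + 1) x * A (n + 1) - G (n + 2) x * B (n + 2) := by
      intro x
      have h := hGr (n + 1) x
      rw [show n + 1 + 1 = n + 2 by omega, show n + 1 + 2 = n + 3 by omega] at h
      rw [h]; abel
    -- Q (n+1) = (C (n+3))⁻¹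
    have hQ1 : ∀ x : ℂ, V (n + 2) x * G1 (n + 2) x - V1 (n + 1) x * G (n + 3) x
        = (C (n + 3))⁻¹ := by
      intro x
      have key : (V (n + 2) x * G1 (n + 2) x - V1 (n + 1) x * G (n + 3) x) * C (n + 3) = 1 := by
        have : (V (n + 2) x * G1 (n + 2) x - V1 (n + 1) x * G (n + 3) x) * C (n + 3)
            = V (n + 2) x * (G1 (n + 2) x * C (n + 3))
              - V1 (n + 1) x * (G (n + 3) x * C (n + 3)) := by
          simp only [sub_mul, mul_assoc]
        rw [this, eG1, eG]
        have expand : V (n + 2) x * (x • G1 (n + 1) x - G1 n x * A (n + 1) - G1 (n + 1) x * B (n + 2))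
            - V1 (n + 1) x * (x • G (n + 2) x - G (n + 1) x * A (n + 1) - G (n + 2) x * B (n + 2))
            = x • (V (n + 2) x * G1 (n + 1) x - V1 (n + 1) x * G (n + 2) x)
              - (V (n + 2) x * G1 n x - V1 (n + 1) x * G (n + 1) x) * A (n + 1)
              - (V (n + 2) x * G1 (n + 1) x - V1 (n + 1) x * G (n + 2) x) * B (n + 2) := by
          simp only [mul_sub, sub_mul, smul_sub, smul_mul_assoc, mul_smul_comm,
            smul_smul, mul_assoc, one_mul, mul_one]
          abel
        rw [expand, hS1 x, hR x]
        simp [neg_mul, hAi' (n + 1)]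
      have := mcancelR (hC (n + 3)) key
      rwa [one_mul] at this
    -- R (n+1) = -(A (n+2))⁻¹
    have hR1 : ∀ x : ℂ, V (n + 3) x * G1 (n + 1) x - V1 (n + 2) x * G (n + 2) x
        = -(A (n + 2))⁻¹ := by
      intro x
      have key : A (n + 2) * (V (n + 3) x * G1 (n + 1) x - V1 (n + 2) x * G (n + 2) x) = -1 := by
        have : A (n + 2) * (V (n + 3) x * G1 (n + 1) x - V1 (n + 2) x * G (n + 2) x)
            = (A (n + 2) * V (n + 3) x) * G1 (n + 1) x
              - (A (n + 2) * V1 (n + 2) x) * G (n + 2) x := by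
          simp only [mul_sub, mul_assoc]
        rw [this, eV, eV1]
        have expand : (x • V (n + 2) x - B (n + 2) * V (n + 2) x - C (n + 2) * V (n + 1) x) * G1 (n + 1) x
            - (x • V1 (n + 1) x - B (n + 2) * V1 (n + 1) x - C (n + 2) * V1 n x) * G (n + 2) x
            = x • (V (n + 2) x * G1 (n + 1) x - V1 (n + 1) x * G (n + 2) x)
              - B (n + 2) * (V (n + 2) x * G1 (n + 1) x - V1 (n + 1) x * G (n + 2) x)
              - C (n + 2) * (V (n + 1) x * G1 (n + 1) x - V1 n x * G (n + 2) x) := by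
          simp only [mul_sub, sub_mul, smul_sub, smul_mul_assoc, mul_smul_comm,
            smul_smul, mul_assoc, one_mul, mul_one]
          abel
        rw [expand, hS1 x, hQ x]
        simp [hCi (n + 2)]
      have := mcancelL (hA (n + 2)) key
      rwa [mul_neg, mul_one] at this
    -- S (n+2) = 0
    have hS2 : ∀ x : ℂ, V (n + 3) x * G1 (n + 2) x - V1 (n + 2) x * G (n + 3) x = 0 := by
      intro x
      refine mcancel (hA (n + 2)) (hC (n + 3)) ?_
      have key : (A (n + 2) * V (n + 3) x) * (G1 (n + 2) x * C (n + 3))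
          - (A (n + 2) * V1 (n + 2) x) * (G (n + 3) x * C (n + 3)) = 0 := by
        rw [eV, eV1, eG1, eG]
        have expand : (x • V (n + 2) x - B (n + 2) * V (n + 2) x - C (n + 2) * V (n + 1) x)
              * (x • G1 (n + 1) x - G1 n x * A (n + 1) - G1 (n + 1) x * B (n + 2))
            - (x • V1 (n + 1) x - B (n + 2) * V1 (n + 1) x - C (n + 2) * V1 n x)
              * (x • G (n + 2) x - G (n + 1) x * A (n + 1) - G (n + 2) x * B (n + 2))
            = (x * x) • (V (n + 2) x * G1 (n + 1) x - V1 (n + 1) x * G (n + 2) x)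
              - x • ((V (n + 2) x * G1 n x - V1 (n + 1) x * G (n + 1) x) * A (n + 1))
              - x • ((V (n + 2) x * G1 (n + 1) x - V1 (n + 1) x * G (n + 2) x) * B (n + 2))
              - x • (B (n + 2) * (V (n + 2) x * G1 (n + 1) x - V1 (n + 1) x * G (n + 2) x))
              + B (n + 2) * ((V (n + 2) x * G1 n x - V1 (n + 1) x * G (n + 1) x) * A (n + 1))
              + B (n + 2) * ((V (n + 2) x * G1 (n + 1) x - V1 (n + 1) x * G (n + 2) x) * B (n + 2))
              - x • (C (n + 2) * (V (n + 1) x * G1 (n + 1) x - V1 n x * G (n + 2) x))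
              + C (n + 2) * ((V (n + 1) x * G1 n x - V1 n x * G (n + 1) x) * A (n + 1))
              + C (n + 2) * ((V (n + 1) x * G1 (n + 1) x - V1 n x * G (n + 2) x) * B (n + 2)) := by
          simp only [mul_sub, sub_mul, smul_sub, smul_mul_assoc, mul_smul_comm,
            smul_smul, mul_assoc, one_mul, mul_one]
          abel
        rw [expand, hS0 x, hS1 x, hQ x, hR x]
        simp only [smul_zero, zero_mul, mul_zero, neg_mul, zero_sub, sub_zero, add_zero,
          zero_add, smul_neg, mul_neg, mul_one, one_mul, neg_neg, hAi' (n + 1), hCi (n + 2)]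
        have hc : C (n + 2) * ((C (n + 2))⁻¹ * B (n + 2)) = B (n + 2) := by
          rw [← mul_assoc, hCi (n + 2), one_mul]
        rw [hc]
        abel
      calc A (n + 2) * (V (n + 3) x * G1 (n + 2) x - V1 (n + 2) x * G (n + 3) x) * C (n + 3)
          = (A (n + 2) * V (n + 3) x) * (G1 (n + 2) x * C (n + 3))
            - (A (n + 2) * V1 (n + 2) x) * (G (n + 3) x * C (n + 3)) := by
            simp only [mul_sub, sub_mul, mul_assoc]
        _ = 0 := key
    exact ⟨hS1, hS2, hQ1, hR1⟩
end

section
/- With the same recurrences and initial conditions as above, for all n ≥ 0 and all x: V_n(x) G_n^{(1)}(x) − V_{n−1}^{(1)}(x) G_{n+1}(x) = C_{n+1}^{-1} (matrix Liouville–Ostrogradski formula). -/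
section aux

variable {N : ℕ}

private lemma solveL {M X R : Matrix (Fin N) (Fin N) ℂ} (hM : IsUnit M.det)
    (h : M * X = R) : X = M⁻¹ * R := by
  rw [← h, ← mul_assoc, Matrix.nonsing_inv_mul _ hM, one_mul]

private lemma solveR {M X R : Matrix (Fin N) (Fin N) ℂ} (hM : IsUnit M.det)
    (h : X * M = R) : X = R * M⁻¹ := by
  rw [← h, mul_assoc, Matrix.mul_nonsing_inv _ hM, mul_one]

private lemma grpR (x : ℂ) (p q r s t u a b : Matrix (Fin N) (Fin N) ℂ) :
    p * (x • q - r * a - q * b) - s * (x • t - u * a - t * b)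
      = x • (p * q - s * t) - (p * r - s * u) * a - (p * q - s * t) * b := by
  simp only [mul_sub, sub_mul, smul_sub, mul_smul_comm, smul_mul_assoc, mul_assoc]
  abel

private lemma grpL (x : ℂ) (p q r s t u b c : Matrix (Fin N) (Fin N) ℂ) :
    (x • p - b * p - c * r) * q - (x • s - b * s - c * u) * t
      = x • (p * q - s * t) - b * (p * q - s * t) - c * (r * q - u * t) := by
  simp only [mul_sub, sub_mul, smul_sub, mul_smul_comm, smul_mul_assoc, mul_assoc]
  abel

end aux

/-- Matrix Liouville–Ostrogradski formula:
`Vₙ(x) G⁽¹⁾ₙ(x) - V⁽¹⁾ₙ₋₁(x) Gₙ₊₁(x) = Cₙ₊₁⁻¹` for all `n ≥ 0`, where at `n = 0` the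
term `V⁽¹⁾₋₁` vanishes. -/
theorem stmt6 (N : ℕ)
    (A B C : ℕ → Matrix (Fin N) (Fin N) ℂ)
    (hA : ∀ n, IsUnit (A n).det) (hC : ∀ n, IsUnit (C n).det)
    (V G V1 G1 : ℕ → ℂ → Matrix (Fin N) (Fin N) ℂ)
    (hV0 : ∀ x, V 0 x = 1) (hG0 : ∀ x, G 0 x = 1)
    (hV10 : ∀ x, V1 0 x = (A 0)⁻¹) (hG10 : ∀ x, G1 0 x = (C 1)⁻¹)
    (hVr0 : ∀ x : ℂ, x • V 0 x = A 0 * V 1 x + B 0 * V 0 x)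
    (hVr : ∀ n, ∀ x : ℂ, x • V (n + 1) x =
      A (n + 1) * V (n + 2) x + B (n + 1) * V (n + 1) x + C (n + 1) * V n x)
    (hGr0 : ∀ x : ℂ, x • G 0 x = G 0 x * B 0 + G 1 x * C 1)
    (hGr : ∀ n, ∀ x : ℂ, x • G (n + 1) x =
      G n x * A n + G (n + 1) x * B (n + 1) + G (n + 2) x * C (n + 2))
    (hV1r0 : ∀ x : ℂ, x • V1 0 x = A 1 * V1 1 x + B 1 * V1 0 x)
    (hV1r : ∀ n, ∀ x : ℂ, x • V1 (n + 1) x =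
      A (n + 2) * V1 (n + 2) x + B (n + 2) * V1 (n + 1) x + C (n + 2) * V1 n x)
    (hG1r0 : ∀ x : ℂ, x • G1 0 x = G1 0 x * B 1 + G1 1 x * C 2)
    (hG1r : ∀ n, ∀ x : ℂ, x • G1 (n + 1) x =
      G1 n x * A (n + 1) + G1 (n + 1) x * B (n + 2) + G1 (n + 2) x * C (n + 3)) :
    (∀ x : ℂ, V 0 x * G1 0 x = (C 1)⁻¹) ∧
    ∀ n, ∀ x : ℂ, V (n + 1) x * G1 (n + 1) x - V1 n x * G (n + 2) x = (C (n + 2))⁻¹ := by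
  have hbase : ∀ x : ℂ, V 0 x * G1 0 x = (C 1)⁻¹ := by
    intro x; rw [hV0, hG10, one_mul]
  refine ⟨hbase, ?_⟩
  have key : ∀ n, ∀ x : ℂ,
      (V (n+1) x * G1 (n+1) x - V1 n x * G (n+2) x = (C (n+2))⁻¹) ∧
      (V (n+2) x * G1 (n+1) x - V1 (n+1) x * G (n+2) x = 0) ∧
      (V (n+1) x * G1 (n+2) x - V1 n x * G (n+3) x
        = (C (n+2))⁻¹ * (x • (1 : Matrix (Fin N) (Fin N) ℂ) - B (n+2)) * (C (n+3))⁻¹) ∧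
      (V (n+2) x * G1 n x - V1 (n+1) x * G (n+1) x = -(A (n+1))⁻¹) := by
    intro n
    induction n with
    | zero =>
      intro x
      -- level-0 facts
      have hA0V1 : A 0 * V 1 x = x • (1 : Matrix (Fin N) (Fin N) ℂ) - B 0 := by
        have h := hVr0 x
        rw [hV0 x, mul_one] at h
        rw [h]; abel
      have hG1C1 : G 1 x * C 1 = x • (1 : Matrix (Fin N) (Fin N) ℂ) - B 0 := by
        have h := hGr0 x
        rw [hG0 x, one_mul] at h
        rw [h]; abel
      have hW0 : V 1 x * G1 0 x - V1 0 x * G 1 x = 0 := by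
        rw [hG10 x, hV10 x, solveL (hA 0) hA0V1, solveR (hC 1) hG1C1, mul_assoc]
        exact sub_self _
      have hg11 : G1 1 x * C 2
          = x • G1 0 x - (0 : Matrix (Fin N) (Fin N) ℂ) * A 0 - G1 0 x * B 1 := by
        rw [hG1r0 x, zero_mul]; abel
      have hg2 : G 2 x * C 2 = x • G 1 x - G 0 x * A 0 - G 1 x * B 1 := by
        have h := hGr 0 x
        simp only [Nat.reduceAdd, Nat.zero_add, zero_add] at h
        rw [h]; abel
      have keyS : (V 1 x * G1 1 x - V1 0 x * G 2 x) * C 2 = 1 := by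
        rw [sub_mul, mul_assoc, mul_assoc, hg11, hg2, grpR x, hW0, hG0 x, hV10 x]
        simp [Matrix.nonsing_inv_mul _ (hA 0)]
      have hS1 : V 1 x * G1 1 x - V1 0 x * G 2 x = (C 2)⁻¹ :=
        (Matrix.inv_eq_left_inv keyS).symm
      have hav2 : A 1 * V 2 x = x • V 1 x - B 1 * V 1 x - C 1 * V 0 x := by
        have h := hVr 0 x
        simp only [Nat.reduceAdd, Nat.zero_add, zero_add] at h
        rw [h]; abel
      have hav11 : A 1 * V1 1 x
          = x • V1 0 x - B 1 * V1 0 x - C 1 * (0 : Matrix (Fin N) (Fin N) ℂ) := by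
        rw [hV1r0 x, mul_zero]; abel
      have keyX : A 1 * (V 2 x * G1 0 x - V1 1 x * G 1 x) = -1 := by
        rw [mul_sub, ← mul_assoc, ← mul_assoc, hav2, hav11, grpL x, hW0, zero_mul,
          sub_zero, hbase x]
        simp [Matrix.mul_nonsing_inv _ (hC 1)]
      have hX1 : V 2 x * G1 0 x - V1 1 x * G 1 x = -(A 1)⁻¹ := by
        rw [solveL (hA 1) keyX]; simp
      have hU0 : V 0 x * G1 1 x - (0 : Matrix (Fin N) (Fin N) ℂ) * G 2 x
          = (C 1)⁻¹ * (x • (1 : Matrix (Fin N) (Fin N) ℂ) - B 1) * (C 2)⁻¹ := by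
        rw [hV0 x, one_mul, zero_mul, sub_zero, solveR (hC 2) hg11, hG10 x, zero_mul,
          sub_zero]
        congr 1
        simp only [mul_sub, mul_smul_comm, mul_one]
      have keyW : A 1 * (V 2 x * G1 1 x - V1 1 x * G 2 x) = 0 := by
        rw [mul_sub, ← mul_assoc, ← mul_assoc, hav2, hav11, grpL x, hS1, hU0,
          ← mul_assoc, ← mul_assoc, Matrix.mul_nonsing_inv _ (hC 1), one_mul, sub_mul,
          smul_mul_assoc, one_mul]
        abel
      have hW1 : V 2 x * G1 1 x - V1 1 x * G 2 x = 0 := by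
        rw [solveL (hA 1) keyW, mul_zero]
      have hg12 : G1 2 x * C 3 = x • G1 1 x - G1 0 x * A 1 - G1 1 x * B 2 := by
        have h := hG1r 0 x
        simp only [Nat.reduceAdd, Nat.zero_add, zero_add] at h
        rw [h]; abel
      have hg3 : G 3 x * C 3 = x • G 2 x - G 1 x * A 1 - G 2 x * B 2 := by
        have h := hGr 1 x
        simp only [Nat.reduceAdd] at h
        rw [h]; abel
      have keyU : (V 1 x * G1 2 x - V1 0 x * G 3 x) * C 3
          = (C 2)⁻¹ * (x • (1 : Matrix (Fin N) (Fin N) ℂ) - B 2) := by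
        rw [sub_mul, mul_assoc, mul_assoc, hg12, hg3, grpR x, hS1, hW0]
        simp only [zero_mul, mul_sub, mul_smul_comm, mul_one]
        abel
      have hU1 : V 1 x * G1 2 x - V1 0 x * G 3 x
          = (C 2)⁻¹ * (x • (1 : Matrix (Fin N) (Fin N) ℂ) - B 2) * (C 3)⁻¹ :=
        solveR (hC 3) keyU
      exact ⟨hS1, hW1, hU1, hX1⟩
    | succ n ih =>
      intro x
      obtain ⟨hS, hW, hU, hX⟩ := ih x
      have hg1 : G1 (n+2) x * C (n+3)
          = x • G1 (n+1) x - G1 n x * A (n+1) - G1 (n+1) x * B (n+2) := by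
        rw [hG1r n x]; abel
      have hg2 : G (n+3) x * C (n+3)
          = x • G (n+2) x - G (n+1) x * A (n+1) - G (n+2) x * B (n+2) := by
        have h := hGr (n+1) x
        rw [show n+1+1 = n+2 from rfl, show n+1+2 = n+3 from rfl] at h
        rw [h]; abel
      have hS2 : V (n+2) x * G1 (n+2) x - V1 (n+1) x * G (n+3) x = (C (n+3))⁻¹ := by
        have k : (V (n+2) x * G1 (n+2) x - V1 (n+1) x * G (n+3) x) * C (n+3) = 1 := by
          rw [sub_mul, mul_assoc, mul_assoc, hg1, hg2, grpR x, hW, hX]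
          simp [Matrix.nonsing_inv_mul _ (hA (n+1))]
        exact (Matrix.inv_eq_left_inv k).symm
      have hav1 : A (n+2) * V (n+3) x
          = x • V (n+2) x - B (n+2) * V (n+2) x - C (n+2) * V (n+1) x := by
        have h := hVr (n+1) x
        rw [show n+1+1 = n+2 from rfl, show n+1+2 = n+3 from rfl] at h
        rw [h]; abel
      have hav2 : A (n+2) * V1 (n+2) x
          = x • V1 (n+1) x - B (n+2) * V1 (n+1) x - C (n+2) * V1 n x := by
        rw [hV1r n x]; abel
      have hX2 : V (n+3) x * G1 (n+1) x - V1 (n+2) x * G (n+2) x = -(A (n+2))⁻¹ := by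
        have k : A (n+2) * (V (n+3) x * G1 (n+1) x - V1 (n+2) x * G (n+2) x) = -1 := by
          rw [mul_sub, ← mul_assoc, ← mul_assoc, hav1, hav2, grpL x, hW, hS]
          simp [Matrix.mul_nonsing_inv _ (hC (n+2))]
        rw [solveL (hA (n+2)) k]; simp
      have hW2 : V (n+3) x * G1 (n+2) x - V1 (n+2) x * G (n+3) x = 0 := by
        have k : A (n+2) * (V (n+3) x * G1 (n+2) x - V1 (n+2) x * G (n+3) x) = 0 := by
          rw [mul_sub, ← mul_assoc, ← mul_assoc, hav1, hav2, grpL x, hS2, hU,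
            ← mul_assoc, ← mul_assoc, Matrix.mul_nonsing_inv _ (hC (n+2)), one_mul,
            sub_mul, smul_mul_assoc, one_mul]
          abel
        rw [solveL (hA (n+2)) k, mul_zero]
      have hg1' : G1 (n+3) x * C (n+4)
          = x • G1 (n+2) x - G1 (n+1) x * A (n+2) - G1 (n+2) x * B (n+3) := by
        have h := hG1r (n+1) x
        rw [show n+1+1 = n+2 from rfl, show n+1+2 = n+3 from rfl,
          show n+1+3 = n+4 from rfl] at h
        rw [h]; abel
      have hg2' : G (n+4) x * C (n+4)
          = x • G (n+3) x - G (n+2) x * A (n+2) - G (n+3) x * B (n+3) := by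
        have h := hGr (n+2) x
        rw [show n+2+1 = n+3 from rfl, show n+2+2 = n+4 from rfl] at h
        rw [h]; abel
      have hU2 : V (n+2) x * G1 (n+3) x - V1 (n+1) x * G (n+4) x
          = (C (n+3))⁻¹ * (x • (1 : Matrix (Fin N) (Fin N) ℂ) - B (n+3)) * (C (n+4))⁻¹ := by
        have k : (V (n+2) x * G1 (n+3) x - V1 (n+1) x * G (n+4) x) * C (n+4)
            = (C (n+3))⁻¹ * (x • (1 : Matrix (Fin N) (Fin N) ℂ) - B (n+3)) := by
          rw [sub_mul, mul_assoc, mul_assoc, hg1', hg2', grpR x, hS2, hW]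
          simp only [zero_mul, mul_sub, mul_smul_comm, mul_one]
          abel
        exact solveR (hC (n+4)) k
      exact ⟨hS2, hW2, hU2, hX2⟩
  intro n x
  exact (key n x).1
end

section
/- Let (D_n) be an increasing sequence of positive definite N × N Hermitian matrices (D_{n+1} ≥ D_n), and suppose the sequences D_n^{-1/2} A_n D_n^{-1/2}, D_n^{-1/2} B_n D_n^{-1/2}, D_n^{-1/2} C_n D_n^{-1/2} converge. Then for n ≤ k, the matrices D_k^{-1/2} A_n D_k^{-1/2}, D_k^{-1/2} B_n D_k^{-1/2}, D_k^{-1/2} C_n D_k^{-1/2} are uniformly bounded in operator norm (by a constant independent of n and k). -/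
open Filter
open scoped ComplexOrder Topology

namespace Matrix.PosSemidef

/-- The positive semidefinite square root of a positive semidefinite matrix (the definition of
`Matrix.PosSemidef.sqrt` in older Mathlib, which has since been removed). -/
noncomputable def sqrt {n : Type*} [Fintype n] [DecidableEq n] {𝕜 : Type*} [RCLike 𝕜]
    {A : Matrix n n 𝕜} (hA : A.PosSemidef) : Matrix n n 𝕜 :=
  (hA.isHermitian.eigenvectorUnitary : Matrix n n 𝕜) *
    Matrix.diagonal ((↑) ∘ (√·) ∘ hA.isHermitian.eigenvalues) *
    (star (hA.isHermitian.eigenvectorUnitary : Matrix n n 𝕜))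

end Matrix.PosSemidef

/-! Write `X^{(k)} = D_k^{-1/2} X D_k^{-1/2}`. For `n ≤ k` and `T = D_n^{1/2} D_k^{-1/2}` one has
`X_n^{(k)} = T⋆ X_n^{(n)} T`, and `‖T‖² = ‖D_k^{-1/2} D_n D_k^{-1/2}‖ ≤ 1` because `D_n ≤ D_k`.
So `‖X_n^{(k)}‖ ≤ ‖X_n^{(n)}‖`, and the right-hand side is bounded since `X_n^{(n)}` converges.
Since `PosSemidef.sqrt` is the continuous functional calculus square root, the argument runs in
any C⋆-algebra, with `D^{-1/2}` the real power `D ^ (-1/2)`. -/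

namespace CFC

variable {A : Type*} [PartialOrder A] [Ring A] [StarRing A] [TopologicalSpace A]
  [StarOrderedRing A] [Algebra ℝ A] [ContinuousFunctionalCalculus ℝ A IsSelfAdjoint]
  [NonnegSpectrumClass ℝ A] [IsSemitopologicalRing A] [T2Space A]

lemma sqrt_mul_rpow_neg_one_half (a : A) (ha : IsStrictlyPositive a := by cfc_tac) :
    sqrt a * a ^ (-(1 / 2) : ℝ) = 1 := by
  rw [sqrt_eq_rpow, ← rpow_add ha.isUnit]
  norm_num
  exact rpow_zero a

lemma rpow_neg_one_half_mul_sqrt (a : A) (ha : IsStrictlyPositive a := by cfc_tac) :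
    a ^ (-(1 / 2) : ℝ) * sqrt a = 1 := by
  rw [sqrt_eq_rpow, ← rpow_add ha.isUnit]
  norm_num
  exact rpow_zero a

end CFC

section CStarAlgebra

open CFC

variable {A : Type*} [CStarAlgebra A] [PartialOrder A] [StarOrderedRing A]

lemma norm_rpow_neg_one_half_conj_le_of_le {a b : A} (hab : a ≤ b) (x : A)
    (ha : IsStrictlyPositive a := by cfc_tac) :
    ‖b ^ (-(1 / 2) : ℝ) * x * b ^ (-(1 / 2) : ℝ)‖ ≤
      ‖a ^ (-(1 / 2) : ℝ) * x * a ^ (-(1 / 2) : ℝ)‖ := by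
  set y := a ^ (-(1 / 2) : ℝ) * x * a ^ (-(1 / 2) : ℝ)
  set t := sqrt a * b ^ (-(1 / 2) : ℝ)
  have ht : ‖t‖ ≤ 1 := (le_iff_norm_sqrt_mul_rpow a b (hb := ha.of_le hab)).mp hab
  have hfac : b ^ (-(1 / 2) : ℝ) * x * b ^ (-(1 / 2) : ℝ) = star t * y * t := by
    have hstar : star t = b ^ (-(1 / 2) : ℝ) * sqrt a := by
      rw [star_mul, (sqrt_nonneg a).isSelfAdjoint.star_eq, rpow_nonneg.isSelfAdjoint.star_eq]
    calc _ = b ^ (-(1 / 2) : ℝ) * (sqrt a * a ^ (-(1 / 2) : ℝ)) * x *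
          (a ^ (-(1 / 2) : ℝ) * sqrt a) * b ^ (-(1 / 2) : ℝ) := by
          rw [sqrt_mul_rpow_neg_one_half a, rpow_neg_one_half_mul_sqrt a, mul_one, mul_one]
      _ = star t * y * t := by simp only [hstar, y, t, mul_assoc]
  calc _ = ‖star t * y * t‖ := by rw [hfac]
    _ ≤ ‖star t‖ * ‖y‖ * ‖t‖ := norm_mul₃_le
    _ = (‖t‖ * ‖t‖) * ‖y‖ := by rw [norm_star]; ring
    _ ≤ ‖y‖ := mul_le_of_le_one_left (norm_nonneg y) (mul_le_one₀ ht (norm_nonneg t) ht)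

lemma exists_norm_rpow_neg_one_half_conj_le_of_tendsto {d x : ℕ → A} {l : A}
    (hd : Monotone d) (hpos : ∀ n, IsStrictlyPositive (d n))
    (hx : Tendsto (fun n ↦ d n ^ (-(1 / 2) : ℝ) * x n * d n ^ (-(1 / 2) : ℝ)) atTop (𝓝 l)) :
    ∃ K, ∀ n k, n ≤ k → ‖d k ^ (-(1 / 2) : ℝ) * x n * d k ^ (-(1 / 2) : ℝ)‖ ≤ K := by
  obtain ⟨K, hK⟩ := hx.norm.bddAbove_range
  exact ⟨K, fun n k hnk ↦
    (norm_rpow_neg_one_half_conj_le_of_le (hd hnk) (x n) (hpos n)).trans (hK ⟨n, rfl⟩)⟩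

end CStarAlgebra

namespace Matrix

open scoped MatrixOrder

variable {n : Type*} [Fintype n] [DecidableEq n]

lemma PosSemidef.sqrt_eq_cfcSqrt {𝕜 : Type*} [RCLike 𝕜] {A : Matrix n n 𝕜} (hA : A.PosSemidef) :
    hA.sqrt = CFC.sqrt A := by
  rw [CFC.sqrt_eq_real_sqrt A hA.nonneg, cfcₙ_eq_cfc, hA.isHermitian.cfc_eq, IsHermitian.cfc,
    Unitary.conjStarAlgAut_apply]
  rfl

lemma PosDef.inv_sqrt_eq_rpow {𝕜 : Type*} [RCLike 𝕜] {A : Matrix n n 𝕜} (hA : A.PosDef) :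
    (hA.posSemidef.sqrt)⁻¹ = A ^ (-(1 / 2) : ℝ) := by
  rw [hA.posSemidef.sqrt_eq_cfcSqrt]
  exact inv_eq_left_inv (CFC.rpow_neg_one_half_mul_sqrt A hA.isStrictlyPositive)

lemma exists_norm_inv_sqrt_conj_le_of_tendsto {D X : ℕ → Matrix n n ℂ} {L : Matrix n n ℂ}
    (hD : ∀ k, (D k).PosDef) (hmono : Monotone D)
    (hX : Tendsto (fun k ↦ ((hD k).posSemidef.sqrt)⁻¹ * X k * ((hD k).posSemidef.sqrt)⁻¹)
      atTop (𝓝 L)) :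
    ∃ K : ℝ, ∀ i k, i ≤ k →
      ‖toEuclideanCLM (𝕜 := ℂ) (((hD k).posSemidef.sqrt)⁻¹ * X i * ((hD k).posSemidef.sqrt)⁻¹)‖
        ≤ K := by
  -- `simp` cannot recover the `PosDef` proof from `(hD k).posSemidef`, so instantiate it by hand
  have hinv k : ((hD k).posSemidef.sqrt)⁻¹ = D k ^ (-(1 / 2) : ℝ) := (hD k).inv_sqrt_eq_rpow
  simp only [hinv] at hX ⊢
  open scoped Matrix.Norms.L2Operator in
  exact exists_norm_rpow_neg_one_half_conj_le_of_tendsto hmono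
    (fun k ↦ (hD k).isStrictlyPositive) hX

end Matrix

/-- If `(Dₙ)` is an increasing sequence of positive definite matrices and the scaled
recurrence coefficients `Dₙ^{-1/2} Aₙ Dₙ^{-1/2}`, `Dₙ^{-1/2} Bₙ Dₙ^{-1/2}`,
`Dₙ^{-1/2} Cₙ Dₙ^{-1/2}` converge, then for `n ≤ k` the matrices
`D_k^{-1/2} Aₙ D_k^{-1/2}`, `D_k^{-1/2} Bₙ D_k^{-1/2}`, `D_k^{-1/2} Cₙ D_k^{-1/2}` are
uniformly bounded in operator norm, by a constant independent of `n` and `k`. -/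
theorem stmt8 (N : ℕ) (A B C D : ℕ → Matrix (Fin N) (Fin N) ℂ)
    (hD : ∀ n, (D n).PosDef)
    (hmono : ∀ n, (D (n + 1) - D n).PosSemidef)
    (A' B' C' : Matrix (Fin N) (Fin N) ℂ)
    (hA : Tendsto (fun n =>
      ((hD n).posSemidef.sqrt)⁻¹ * A n * ((hD n).posSemidef.sqrt)⁻¹) atTop (𝓝 A'))
    (hB : Tendsto (fun n =>
      ((hD n).posSemidef.sqrt)⁻¹ * B n * ((hD n).posSemidef.sqrt)⁻¹) atTop (𝓝 B'))
    (hC : Tendsto (fun n =>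
      ((hD n).posSemidef.sqrt)⁻¹ * C n * ((hD n).posSemidef.sqrt)⁻¹) atTop (𝓝 C')) :
    ∃ K : ℝ, ∀ n k, n ≤ k →
      ‖Matrix.toEuclideanCLM (𝕜 := ℂ)
        (((hD k).posSemidef.sqrt)⁻¹ * A n * ((hD k).posSemidef.sqrt)⁻¹)‖ ≤ K ∧
      ‖Matrix.toEuclideanCLM (𝕜 := ℂ)
        (((hD k).posSemidef.sqrt)⁻¹ * B n * ((hD k).posSemidef.sqrt)⁻¹)‖ ≤ K ∧
      ‖Matrix.toEuclideanCLM (𝕜 := ℂ)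
        (((hD k).posSemidef.sqrt)⁻¹ * C n * ((hD k).posSemidef.sqrt)⁻¹)‖ ≤ K := by
  open scoped MatrixOrder in
  have hDmono : Monotone D := monotone_nat_of_le_succ hmono
  obtain ⟨KA, hKA⟩ := Matrix.exists_norm_inv_sqrt_conj_le_of_tendsto hD hDmono hA
  obtain ⟨KB, hKB⟩ := Matrix.exists_norm_inv_sqrt_conj_le_of_tendsto hD hDmono hB
  obtain ⟨KC, hKC⟩ := Matrix.exists_norm_inv_sqrt_conj_le_of_tendsto hD hDmono hC
  exact ⟨max KA (max KB KC), fun n k hnk ↦ ⟨(hKA n k hnk).trans (by simp),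
    (hKB n k hnk).trans (by simp), (hKC n k hnk).trans (by simp)⟩⟩
end
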